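/- arXiv:1301.1153 — 2 statements merged into one kernel-verified Lean document; each statement's English description precedes it below -/
import Mathlib

section
/- Let v_1,…,v_n be gross substitute integer-valued valuations on a finite set Ω. Then the Lyapunov function is submodular with respect to the componentwise lattice on integer price vectors: for all integer price vectors p and q, L(max(p,q)) + L(min(p,q)) ≤ L(p) + L(q), where max(p,q) and min(p,q) are the componentwise maximum and minimum of p and q. -/
open Finset

noncomputable section

variable {Ω : Type*}

/-- The utility of a set `S` under valuation `v` and price vector `p`. -/
def util (v : Finset Ω → ℝ) (p : Ω → ℝ) (S : Finset Ω) : ℝ := v S - ∑ j ∈ S, p j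

/-- The demand set: all sets maximizing utility. -/
def Demand (v : Finset Ω → ℝ) (p : Ω → ℝ) : Set (Finset Ω) :=
  {S | ∀ T : Finset Ω, util v p T ≤ util v p S}

/-- The minimal demand sets: demand sets all of whose proper subsets have strictly
smaller utility. -/
def DemandMin (v : Finset Ω → ℝ) (p : Ω → ℝ) : Set (Finset Ω) :=
  {S | S ∈ Demand v p ∧ ∀ T : Finset Ω, T ⊂ S → util v p T < util v p S}

/-- The maximum utility of a player. -/
def maxUtil [Fintype Ω] (v : Finset Ω → ℝ) (p : Ω → ℝ) : ℝ :=
  Finset.univ.sup' Finset.univ_nonempty (util v p)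

/-- A valuation: zero on the empty set and monotone under inclusion. -/
def IsValuation (v : Finset Ω → ℝ) : Prop :=
  v ∅ = 0 ∧ ∀ S T : Finset Ω, S ⊆ T → v S ≤ v T

/-- Gross substitutes: if prices (weakly) increase, there is a demanded set containing
all previously demanded items whose price did not change. -/
def GrossSubstitute (v : Finset Ω → ℝ) : Prop :=
  ∀ p q : Ω → ℝ, (∀ j, 0 ≤ p j) → (∀ j, p j ≤ q j) →
    ∀ S ∈ Demand v p, ∃ S' ∈ Demand v q, ∀ j ∈ S, p j = q j → j ∈ S'

/-- `GGS k M`: the `(k,M)`-truncations of gross substitute valuations. -/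
def GGS (k : ℕ) (M : ℝ) (v : Finset Ω → ℝ) : Prop :=
  ∃ g : Finset Ω → ℝ, IsValuation g ∧ GrossSubstitute g ∧
    (∀ S : Finset Ω, S.card < k → v S = g S ∧ g S ≤ M) ∧
    (∀ S : Finset Ω, k ≤ S.card → v S = M ∧ M ≤ g S)

/-- `f_{v,p}(S) = min_{D ∈ D*_v(p)} |D ∩ S|`. -/
def fMin [DecidableEq Ω] (v : Finset Ω → ℝ) (p : Ω → ℝ) (S : Finset Ω) : ℕ :=
  sInf ((fun D => (D ∩ S).card) '' DemandMin v p)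

/-- `f_p(S) = (Σ_i f_{i,p}(S)) − |S|`. -/
def fTot [DecidableEq Ω] {n : ℕ} (v : Fin n → Finset Ω → ℝ) (p : Ω → ℝ) (S : Finset Ω) : ℤ :=
  (∑ i, (fMin (v i) p S : ℤ)) - S.card

/-- The Lyapunov function `L(p) = Σ_i u_{i,p} + Σ_j p(j)`. -/
def Lyap [Fintype Ω] {n : ℕ} (v : Fin n → Finset Ω → ℝ) (p : Ω → ℝ) : ℝ :=
  (∑ i, maxUtil (v i) p) + ∑ j, p j

/-- An envy-free allocation: pairwise disjoint sets, each demanded by its player. -/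
def EnvyFree {n : ℕ} (v : Fin n → Finset Ω → ℝ) (p : Ω → ℝ) (A : Fin n → Finset Ω) : Prop :=
  (∀ i j, i ≠ j → Disjoint (A i) (A j)) ∧ ∀ i, A i ∈ Demand (v i) p

/-- A Walrasian allocation: envy-free, and every unallocated item has price zero. -/
def Walrasian {n : ℕ} (v : Fin n → Finset Ω → ℝ) (p : Ω → ℝ) (A : Fin n → Finset Ω) : Prop :=
  EnvyFree v p A ∧ ∀ x : Ω, (∀ i, x ∉ A i) → p x = 0

/-- `addInd p S = p + 1_S`: increase the price of every item of `S` by one. -/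
def addInd [DecidableEq Ω] (p : Ω → ℝ) (S : Finset Ω) : Ω → ℝ :=
  fun j => p j + if j ∈ S then 1 else 0

/-- An integer price vector. -/
def IsIntVec (p : Ω → ℝ) : Prop := ∀ j, ∃ z : ℤ, p j = z

/-- An integer-valued valuation. -/
def IsIntVal (v : Finset Ω → ℝ) : Prop := ∀ S : Finset Ω, ∃ z : ℤ, v S = z

/-- A small player: every demanded set is a singleton. -/
def SmallPlayer (v : Finset Ω → ℝ) (p : Ω → ℝ) : Prop :=
  ∀ S ∈ Demand v p, ∃ x, S = {x}


section AuxSubmod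
set_option linter.unusedSectionVars false
variable {Ω : Type*} [Fintype Ω] (v : Finset Ω → ℝ)


lemma util_le_maxUtil (p : Ω → ℝ) (S : Finset Ω) : util v p S ≤ maxUtil v p :=
  Finset.le_sup' (util v p) (Finset.mem_univ S)

lemma exists_demand (p : Ω → ℝ) : ∃ S, S ∈ Demand v p ∧ util v p S = maxUtil v p := by
  obtain ⟨S, -, hS⟩ := Finset.exists_mem_eq_sup' (Finset.univ_nonempty) (util v p)
  exact ⟨S, fun T => hS ▸ util_le_maxUtil v p T, hS.symm⟩

lemma demand_util {p : Ω → ℝ} {S : Finset Ω} (h : S ∈ Demand v p) :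
    util v p S = maxUtil v p := by
  obtain ⟨T, -, hT⟩ := exists_demand v p
  exact le_antisymm (util_le_maxUtil v p S) (hT ▸ h T)

lemma mem_demand_of_eq {p : Ω → ℝ} {S : Finset Ω} (h : util v p S = maxUtil v p) :
    S ∈ Demand v p := fun T => h ▸ util_le_maxUtil v p T

lemma maxUtil_mono {x y : Ω → ℝ} (h : ∀ i, x i ≤ y i) : maxUtil v y ≤ maxUtil v x := by
  obtain ⟨S, -, hS⟩ := exists_demand v y
  rw [← hS]
  calc util v y S ≤ util v x S := by
        unfold util
        have : ∑ j ∈ S, x j ≤ ∑ j ∈ S, y j := Finset.sum_le_sum fun j _ => h j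
        linarith
    _ ≤ maxUtil v x := util_le_maxUtil v x S

lemma int_gap {a b : ℝ} (ha : ∃ z : ℤ, a = z) (hb : ∃ z : ℤ, b = z) (h : a < b) :
    a + 1 ≤ b := by
  obtain ⟨za, rfl⟩ := ha; obtain ⟨zb, rfl⟩ := hb
  have : za < zb := by exact_mod_cast h
  have : za + 1 ≤ zb := this
  exact_mod_cast this

lemma sum_int {x : Ω → ℝ} (hx : IsIntVec x) (S : Finset Ω) : ∃ z : ℤ, ∑ j ∈ S, x j = z := by
  choose f hf using hx
  refine ⟨∑ j ∈ S, f j, ?_⟩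
  push_cast
  exact Finset.sum_congr rfl fun j _ => hf j

lemma util_int {x : Ω → ℝ} (hv : IsIntVal v) (hx : IsIntVec x) (S : Finset Ω) :
    ∃ z : ℤ, util v x S = z := by
  obtain ⟨z1, h1⟩ := hv S; obtain ⟨z2, h2⟩ := sum_int hx S
  exact ⟨z1 - z2, by rw [util, h1, h2]; push_cast; ring⟩

lemma maxUtil_int {x : Ω → ℝ} (hv : IsIntVal v) (hx : IsIntVec x) :
    ∃ z : ℤ, maxUtil v x = z := by
  obtain ⟨S, -, hS⟩ := exists_demand v x
  exact hS ▸ util_int v hv hx S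

lemma addInd_int [DecidableEq Ω] {x : Ω → ℝ} (hx : IsIntVec x) (A : Finset Ω) :
    IsIntVec (addInd x A) := by
  intro j; obtain ⟨z, hz⟩ := hx j
  by_cases h : j ∈ A
  · exact ⟨z + 1, by simp [addInd, h, hz]⟩
  · exact ⟨z, by simp [addInd, h, hz]⟩

lemma addInd_nonneg [DecidableEq Ω] {x : Ω → ℝ} (hx : ∀ j, 0 ≤ x j) (A : Finset Ω) :
    ∀ j, 0 ≤ addInd x A j := by
  intro j; unfold addInd; split_ifs <;> linarith [hx j]

lemma util_addInd_single [DecidableEq Ω] (x : Ω → ℝ) (j : Ω) (S : Finset Ω) :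
    util v (addInd x {j}) S = util v x S - (if j ∈ S then 1 else 0) := by
  unfold util addInd
  rw [Finset.sum_add_distrib]
  simp only [Finset.mem_singleton]
  rw [Finset.sum_ite_eq' S j (fun _ => (1:ℝ))]
  ring

lemma local_submod [DecidableEq Ω] (hgs : GrossSubstitute v) (hv : IsIntVal v)
    (x : Ω → ℝ) (hx0 : ∀ i, 0 ≤ x i) (hxi : IsIntVec x) {j k : Ω} (hjk : j ≠ k) :
    maxUtil v x + maxUtil v (addInd (addInd x {j}) {k})
      ≤ maxUtil v (addInd x {j}) + maxUtil v (addInd x {k}) := by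
  set U := maxUtil v x with hU
  set Uj := maxUtil v (addInd x {j}) with hUj
  set Uk := maxUtil v (addInd x {k}) with hUk
  set Ujk := maxUtil v (addInd (addInd x {j}) {k}) with hUjk
  have hints : IsIntVec (addInd x {j}) := addInd_int hxi _
  have hUint : ∃ z : ℤ, U = z := maxUtil_int v hv hxi
  have hUjint : ∃ z : ℤ, Uj = z := maxUtil_int v hv hints
  have hUkint : ∃ z : ℤ, Uk = z := maxUtil_int v hv (addInd_int hxi _)
  have hUjkint : ∃ z : ℤ, Ujk = z := maxUtil_int v hv (addInd_int hints _)
  -- monotonicity facts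
  have hmj : Uj ≤ U := maxUtil_mono v (fun i => by unfold addInd; split_ifs <;> linarith)
  have hmk : Uk ≤ U := maxUtil_mono v (fun i => by unfold addInd; split_ifs <;> linarith)
  have hmjk_j : Ujk ≤ Uj := maxUtil_mono v (fun i => by unfold addInd; split_ifs <;> linarith)
  have hmjk_k : Ujk ≤ Uk := maxUtil_mono v (fun i => by
    unfold addInd; simp only [Finset.mem_singleton]; split_ifs <;> linarith)
  -- lower bounds : raising one price loses at most 1
  obtain ⟨D, hDd, hDu⟩ := exists_demand v x
  have hlj : U - 1 ≤ Uj := by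
    have := util_le_maxUtil v (addInd x {j}) D
    rw [util_addInd_single, hDu] at this
    split_ifs at this <;> linarith
  have hlk : U - 1 ≤ Uk := by
    have := util_le_maxUtil v (addInd x {k}) D
    rw [util_addInd_single, hDu] at this
    split_ifs at this <;> linarith
  by_cases hj1 : Uj = U
  · linarith
  by_cases hk1 : Uk = U
  · linarith
  -- hard case : Uj = Uk = U - 1
  have hjU : Uj = U - 1 := by
    have := int_gap hUjint hUint (lt_of_le_of_ne hmj hj1); linarith
  have hkU : Uk = U - 1 := by
    have := int_gap hUkint hUint (lt_of_le_of_ne hmk hk1); linarith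
  -- suffices Ujk ≤ U - 2
  by_contra hcon
  push_neg at hcon
  have hUjkval : Ujk = U - 1 := by
    have h1 : U - 2 < Ujk := by linarith
    have := int_gap (by obtain ⟨z, hz⟩ := hUint; exact ⟨z - 2, by push_cast; linarith⟩) hUjkint h1
    linarith
  -- every demanded set at x contains j (and k)
  have haj : ∀ E ∈ Demand v x, j ∈ E := by
    intro E hE
    by_contra hjE
    have h1 := util_le_maxUtil v (addInd x {j}) E
    rw [util_addInd_single, demand_util v hE] at h1
    simp only [hjE, if_false] at h1
    linarith
  have hak : ∀ E ∈ Demand v x, k ∈ E := by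
    intro E hE
    by_contra hkE
    have h1 := util_le_maxUtil v (addInd x {k}) E
    rw [util_addInd_single, demand_util v hE] at h1
    simp only [hkE, if_false] at h1
    linarith
  -- a witness S at prices x+e_j+e_k with j,k ∉ S and util v x S = U - 1
  obtain ⟨S, hSd, hSu⟩ := exists_demand v (addInd (addInd x {j}) {k})
  rw [util_addInd_single, util_addInd_single, ← hUjk] at hSu
  have hjS : j ∉ S := by
    intro hjS
    have hxS : util v x S ≤ U := util_le_maxUtil v x S
    have hkS : k ∉ S := by
      intro hkS
      simp only [hjS, hkS, if_true] at hSu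
      rw [hUjkval] at hSu; linarith
    simp only [hjS, hkS, if_true, if_false] at hSu
    have : util v x S = U := by rw [hUjkval] at hSu; linarith
    exact hkS (hak S (mem_demand_of_eq v this))
  have hkS : k ∉ S := by
    intro hkS
    have hxS : util v x S ≤ U := util_le_maxUtil v x S
    simp only [hjS, hkS, if_true, if_false] at hSu
    have : util v x S = U := by rw [hUjkval] at hSu; linarith
    exact hjS (haj S (mem_demand_of_eq v this))
  simp only [hjS, hkS, if_false] at hSu
  rw [hUjkval] at hSu
  -- hSu : util v x S - 0 - 0 = U - 1
  -- the auxiliary price vector y = x + e_k + 2 e_j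
  set y : Ω → ℝ := fun i => x i + (if i = k then 1 else 0) + (if i = j then 2 else 0) with hy
  have huty : ∀ T, util v y T =
      util v x T - (if k ∈ T then 1 else 0) - (if j ∈ T then 2 else 0) := by
    intro T
    unfold util
    rw [hy]
    rw [Finset.sum_add_distrib, Finset.sum_add_distrib,
      Finset.sum_ite_eq' T k (fun _ => (1:ℝ)), Finset.sum_ite_eq' T j (fun _ => (2:ℝ))]
    ring
  -- maxUtil v y = U - 1
  have hymax : maxUtil v y = U - 1 := by
    apply le_antisymm
    · obtain ⟨T, -, hT⟩ := exists_demand v y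
      rw [← hT, huty]
      by_cases hjT : j ∈ T
      · have := util_le_maxUtil v x T
        simp only [hjT, if_true]
        split_ifs <;> linarith
      · have hTne : util v x T ≠ U := by
          intro h
          exact hjT (haj T (mem_demand_of_eq v h))
        have hTlt : util v x T < U := lt_of_le_of_ne (util_le_maxUtil v x T) hTne
        have := int_gap (util_int v hv hxi T) hUint hTlt
        simp only [hjT, if_false]
        split_ifs <;> linarith
    · have h1 := util_le_maxUtil v y S
      rw [huty] at h1
      simp only [hjS, hkS, if_false] at h1
      linarith
  -- D is demanded at x + e_k
  have hDxk : D ∈ Demand v (addInd x {k}) := by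
    apply mem_demand_of_eq
    rw [util_addInd_single, hDu]
    simp only [hak D hDd, if_true]
    linarith
  -- apply GS from x + e_k to y
  have hle : ∀ i, addInd x {k} i ≤ y i := by
    intro i
    unfold addInd
    simp only [Finset.mem_singleton, hy]
    split_ifs <;> linarith
  obtain ⟨S', hS'd, hS'keep⟩ := hgs (addInd x {k}) y (addInd_nonneg hx0 _) hle D hDxk
  have hkS' : k ∈ S' := by
    apply hS'keep k (hak D hDd)
    unfold addInd
    simp only [Finset.mem_singleton, hy, if_pos rfl]
    have : k ≠ j := fun h => hjk h.symm
    simp [this]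
  have hS'util : util v y S' = U - 1 := by rw [demand_util v hS'd, hymax]
  rw [huty] at hS'util
  simp only [hkS', if_true] at hS'util
  have hjS' : j ∉ S' := by
    intro hjS'
    simp only [hjS', if_true] at hS'util
    have := util_le_maxUtil v x S'
    linarith
  simp only [hjS', if_false] at hS'util
  have : util v x S' = U := by linarith
  exact hjS' (haj S' (mem_demand_of_eq v this))

def shiftN (x : Ω → ℝ) (a : Ω → ℕ) : Ω → ℝ := fun i => x i + (a i : ℝ)

lemma shiftN_nonneg {x : Ω → ℝ} (hx : ∀ i, 0 ≤ x i) (a : Ω → ℕ) :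
    ∀ i, 0 ≤ shiftN x a i := fun i => add_nonneg (hx i) (Nat.cast_nonneg _)

lemma shiftN_int {x : Ω → ℝ} (hx : IsIntVec x) (a : Ω → ℕ) : IsIntVec (shiftN x a) := by
  intro i; obtain ⟨z, hz⟩ := hx i
  exact ⟨z + a i, by simp [shiftN, hz]⟩

lemma shiftN_zero (x : Ω → ℝ) : shiftN x (fun _ => 0) = x := by
  funext i; simp [shiftN]

lemma m_mono [DecidableEq Ω] (hgs : GrossSubstitute v) (hv : IsIntVal v) :
    ∀ (N : ℕ) (x : Ω → ℝ), (∀ i, 0 ≤ x i) → IsIntVec x → ∀ (a : Ω → ℕ), (∑ i, a i) = N →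
    ∀ (k : Ω), a k = 0 →
    maxUtil v x - maxUtil v (addInd x {k})
      ≤ maxUtil v (shiftN x a) - maxUtil v (addInd (shiftN x a) {k}) := by
  intro N
  induction N with
  | zero =>
    intro x hx0 hxi a hN k hak
    have ha : ∀ i, a i = 0 := by
      intro i
      have := Finset.sum_eq_zero_iff.mp hN
      exact this i (Finset.mem_univ i)
    have : shiftN x a = x := by funext i; simp [shiftN, ha i]
    rw [this]
  | succ N ih =>
    intro x hx0 hxi a hN k hak
    have hex : ∃ j, a j ≠ 0 := by
      by_contra h
      push_neg at h
      simp [h] at hN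
    obtain ⟨j, hj⟩ := hex
    have hjk : j ≠ k := fun h => hj (h ▸ hak)
    set a' := Function.update a j (a j - 1) with ha'
    have hak' : a' k = 0 := by rw [ha', Function.update_of_ne (Ne.symm hjk)]; exact hak
    have hsum' : ∑ i, a' i = N := by
      have h1 : ∑ i, a i = a j + ∑ i ∈ Finset.univ.erase j, a i :=
        (Finset.add_sum_erase _ _ (Finset.mem_univ j)).symm
      have h2 : ∑ i, a' i = a' j + ∑ i ∈ Finset.univ.erase j, a' i :=
        (Finset.add_sum_erase _ _ (Finset.mem_univ j)).symm
      have h3 : ∑ i ∈ Finset.univ.erase j, a' i = ∑ i ∈ Finset.univ.erase j, a i := by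
        apply Finset.sum_congr rfl
        intro i hi
        rw [ha', Function.update_of_ne (Finset.ne_of_mem_erase hi)]
      have h4 : a' j = a j - 1 := by rw [ha', Function.update_self]
      omega
    have hfun : shiftN x a = addInd (shiftN x a') {j} := by
      funext i
      simp only [shiftN, addInd, Finset.mem_singleton]
      by_cases hij : i = j
      · subst hij
        rw [ha', if_pos rfl, Function.update_self]
        have h5 : a i - 1 + 1 = a i := Nat.succ_pred_eq_of_pos (Nat.pos_of_ne_zero hj)
        rw [← h5]
        push_cast
        ring
      · rw [ha', if_neg hij, Function.update_of_ne hij]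
        ring
    have step1 := ih x hx0 hxi a' hsum' k hak'
    have step2 := local_submod v hgs hv (shiftN x a') (shiftN_nonneg hx0 a') (shiftN_int hxi a') hjk
    rw [hfun]
    linarith

lemma key_submod [DecidableEq Ω] (hgs : GrossSubstitute v) (hv : IsIntVal v) :
    ∀ (N : ℕ) (s : Ω → ℝ), (∀ i, 0 ≤ s i) → IsIntVec s → ∀ (a b : Ω → ℕ),
    (∑ i, b i) = N → (∀ i, b i ≠ 0 → a i = 0) →
    maxUtil v (shiftN (shiftN s a) b) + maxUtil v s
      ≤ maxUtil v (shiftN s a) + maxUtil v (shiftN s b) := by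
  intro N
  induction N with
  | zero =>
    intro s hs0 hsi a b hN hdisj
    have hb : ∀ i, b i = 0 := fun i =>
      Finset.sum_eq_zero_iff.mp hN i (Finset.mem_univ i)
    have h1 : shiftN (shiftN s a) b = shiftN s a := by funext i; simp [shiftN, hb i]
    have h2 : shiftN s b = s := by funext i; simp [shiftN, hb i]
    rw [h1, h2]
  | succ N ih =>
    intro s hs0 hsi a b hN hdisj
    have hex : ∃ k, b k ≠ 0 := by
      by_contra h
      push_neg at h
      simp [h] at hN
    obtain ⟨k, hk⟩ := hex
    have hak : a k = 0 := hdisj k hk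
    set b' := Function.update b k (b k - 1) with hb'
    have hsum' : ∑ i, b' i = N := by
      have h1 : ∑ i, b i = b k + ∑ i ∈ Finset.univ.erase k, b i :=
        (Finset.add_sum_erase _ _ (Finset.mem_univ k)).symm
      have h2 : ∑ i, b' i = b' k + ∑ i ∈ Finset.univ.erase k, b' i :=
        (Finset.add_sum_erase _ _ (Finset.mem_univ k)).symm
      have h3 : ∑ i ∈ Finset.univ.erase k, b' i = ∑ i ∈ Finset.univ.erase k, b i :=
        Finset.sum_congr rfl fun i hi => by
          rw [hb', Function.update_of_ne (Finset.ne_of_mem_erase hi)]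
      have h4 : b' k = b k - 1 := by rw [hb', Function.update_self]
      omega
    have hdisj' : ∀ i, b' i ≠ 0 → a i = 0 := by
      intro i hi
      apply hdisj
      by_cases hik : i = k
      · exact hik ▸ hk
      · rwa [hb', Function.update_of_ne hik] at hi
    have hfun : ∀ y : Ω → ℝ, shiftN y b = addInd (shiftN y b') {k} := by
      intro y
      funext i
      simp only [shiftN, addInd, Finset.mem_singleton]
      by_cases hik : i = k
      · subst hik
        rw [hb', if_pos rfl, Function.update_self]
        have h5 : b i - 1 + 1 = b i := Nat.succ_pred_eq_of_pos (Nat.pos_of_ne_zero hk)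
        rw [← h5]
        push_cast
        ring
      · rw [hb', if_neg hik, Function.update_of_ne hik]
        ring
    have hcomm : shiftN (shiftN s b') a = shiftN (shiftN s a) b' := by
      funext i; simp only [shiftN]; ring
    have step1 := ih s hs0 hsi a b' hsum' hdisj'
    have step2 := m_mono v hgs hv (∑ i, a i) (shiftN s b')
      (shiftN_nonneg hs0 b') (shiftN_int hsi b') a rfl k hak
    rw [hcomm] at step2
    rw [hfun (shiftN s a), hfun s]
    linarith

end AuxSubmod

/-- the Lyapunov function is submodular w.r.t. the componentwise lattice
on integer price vectors, for gross substitute valuations. -/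
theorem lyapunov_submodular {Ω : Type*} [Fintype Ω] [DecidableEq Ω] {n : ℕ}
    (v : Fin n → Finset Ω → ℝ) (hval : ∀ i, IsValuation (v i))
    (hgs : ∀ i, GrossSubstitute (v i)) (hint : ∀ i, IsIntVal (v i))
    (p q : Ω → ℝ) (hp : ∀ j, 0 ≤ p j) (hq : ∀ j, 0 ≤ q j)
    (hpint : IsIntVec p) (hqint : IsIntVec q) :
    Lyap v (fun j => max (p j) (q j)) + Lyap v (fun j => min (p j) (q j)) ≤
      Lyap v p + Lyap v q := by
  classical
  classical
  set s : Ω → ℝ := fun j => min (p j) (q j) with hs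
  have hs0 : ∀ j, 0 ≤ s j := fun j => le_min (hp j) (hq j)
  have hsi : IsIntVec s := by
    intro j
    obtain ⟨zp, hzp⟩ := hpint j; obtain ⟨zq, hzq⟩ := hqint j
    rcases le_total (p j) (q j) with h | h
    · exact ⟨zp, by show min (p j) (q j) = _; rw [min_eq_left h]; exact hzp⟩
    · exact ⟨zq, by show min (p j) (q j) = _; rw [min_eq_right h]; exact hzq⟩
  have ha : ∀ j, ∃ m : ℕ, p j = s j + m := by
    intro j
    obtain ⟨zp, hzp⟩ := hpint j; obtain ⟨zq, hzq⟩ := hqint j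
    rcases le_total (p j) (q j) with h | h
    · exact ⟨0, by show p j = min (p j) (q j) + _; rw [min_eq_left h]; simp⟩
    · refine ⟨(zp - zq).toNat, ?_⟩
      have hz : zq ≤ zp := by
        have : (zq : ℝ) ≤ (zp : ℝ) := by rw [← hzp, ← hzq]; exact h
        exact_mod_cast this
      have hcast : (((zp - zq).toNat : ℕ) : ℝ) = (zp : ℝ) - zq := by
        rw [← Int.cast_natCast, Int.toNat_of_nonneg (by omega : (0:ℤ) ≤ zp - zq)]
        push_cast; ring
      show p j = min (p j) (q j) + _
      rw [min_eq_right h, hcast, hzp, hzq]; ring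
  have hb : ∀ j, ∃ m : ℕ, q j = s j + m := by
    intro j
    obtain ⟨zp, hzp⟩ := hpint j; obtain ⟨zq, hzq⟩ := hqint j
    rcases le_total (p j) (q j) with h | h
    · refine ⟨(zq - zp).toNat, ?_⟩
      have hz : zp ≤ zq := by
        have : (zp : ℝ) ≤ (zq : ℝ) := by rw [← hzp, ← hzq]; exact h
        exact_mod_cast this
      have hcast : (((zq - zp).toNat : ℕ) : ℝ) = (zq : ℝ) - zp := by
        rw [← Int.cast_natCast, Int.toNat_of_nonneg (by omega : (0:ℤ) ≤ zq - zp)]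
        push_cast; ring
      show q j = min (p j) (q j) + _
      rw [min_eq_left h, hcast, hzp, hzq]; ring
    · exact ⟨0, by show q j = min (p j) (q j) + _; rw [min_eq_right h]; simp⟩
  choose a haa using ha
  choose b hbb using hb
  have hdisj : ∀ j, b j ≠ 0 → a j = 0 := by
    intro j hbj
    have hbj1 : (1:ℝ) ≤ (b j : ℝ) := by exact_mod_cast Nat.one_le_iff_ne_zero.mpr hbj
    have hlt : s j < q j := by have := hbb j; linarith
    rcases min_choice (p j) (q j) with h | h
    · have hsp : s j = p j := by rw [hs]; simpa using h
      have : (a j : ℝ) = 0 := by have := haa j; linarith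
      exact_mod_cast this
    · have hsq : s j = q j := by rw [hs]; simpa using h
      linarith
  have hP : p = shiftN s a := funext haa
  have hQ : q = shiftN s b := funext hbb
  have hmax : (fun j => max (p j) (q j)) = shiftN (shiftN s a) b := by
    funext j
    have h1 : max (p j) (q j) + min (p j) (q j) = p j + q j := max_add_min _ _
    have h2 : min (p j) (q j) = s j := rfl
    simp only [shiftN]
    have h3 := haa j; have h4 := hbb j
    linarith
  unfold Lyap
  rw [hmax]
  have hprice : ∑ j, shiftN (shiftN s a) b j + ∑ j, s j = ∑ j, p j + ∑ j, q j := by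
    rw [← Finset.sum_add_distrib, ← Finset.sum_add_distrib]
    apply Finset.sum_congr rfl
    intro j _
    simp only [shiftN]
    have := haa j; have := hbb j; linarith
  have hplayers : ∀ i, maxUtil (v i) (shiftN (shiftN s a) b) + maxUtil (v i) s
      ≤ maxUtil (v i) p + maxUtil (v i) q := by
    intro i
    rw [hP, hQ]
    exact key_submod (v i) (hgs i) (hint i) (∑ j, b j) s hs0 hsi a b rfl hdisj
  have hsum : ∑ i, maxUtil (v i) (shiftN (shiftN s a) b) + ∑ i, maxUtil (v i) s
      ≤ ∑ i, maxUtil (v i) p + ∑ i, maxUtil (v i) q := by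
    rw [← Finset.sum_add_distrib, ← Finset.sum_add_distrib]
    exact Finset.sum_le_sum fun i _ => hplayers i
  linarith
end
end

section
/- Let v_1,…,v_n be gross substitute integer-valued valuations on a finite set Ω and p an integer price vector. If S ⊆ Ω satisfies f_p(S) ≤ 0, then L(p + 1_S) ≥ L(p). -/
open Finset

noncomputable section

variable {Ω : Type*}

lemma demand_nonempty' [Fintype Ω] (v : Finset Ω → ℝ) (p : Ω → ℝ) :
    ∃ D, D ∈ Demand v p := by
  obtain ⟨D, -, hD⟩ := Finset.exists_mem_eq_sup' (Finset.univ_nonempty (α := Finset Ω)) (util v p)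
  exact ⟨D, fun T => hD ▸ Finset.le_sup' _ (Finset.mem_univ T)⟩

lemma finset_exists_minimal_aux {α : Type*} [Preorder α] (s : Finset α) (h : s.Nonempty) :
    ∃ m ∈ s, ∀ x ∈ s, ¬x < m := by
  obtain ⟨m, hm⟩ := (s : Set α).toFinite.exists_minimal (Finset.coe_nonempty.2 h)
  exact ⟨m, hm.1, fun x hx hlt => hlt.not_ge (hm.2 hx hlt.le)⟩

lemma demandMin_nonempty' [Fintype Ω] (v : Finset Ω → ℝ) (p : Ω → ℝ) :
    ∃ D, D ∈ DemandMin v p := by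
  classical
  obtain ⟨D0, hD0⟩ := demand_nonempty' v p
  obtain ⟨D, hDmem, hmin⟩ := finset_exists_minimal_aux
    (Finset.univ.filter (fun D => ∀ T, util v p T ≤ util v p D))
    ⟨D0, by simpa [Demand] using hD0⟩
  simp only [Finset.mem_filter, Finset.mem_univ, true_and] at hDmem
  refine ⟨D, hDmem, fun T hT => ?_⟩
  refine lt_of_le_of_ne (hDmem T) (fun heq => ?_)
  refine hmin T ?_ hT
  simp only [Finset.mem_filter, Finset.mem_univ, true_and]
  exact fun T' => heq ▸ hDmem T'

lemma maxUtil_eq_of_demand [Fintype Ω] {v : Finset Ω → ℝ} {p : Ω → ℝ} {D : Finset Ω}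
    (hD : D ∈ Demand v p) : maxUtil v p = util v p D := by
  refine le_antisymm (Finset.sup'_le _ _ fun T _ => hD T) (Finset.le_sup' _ (Finset.mem_univ D))

lemma maxUtil_addInd_ge [Fintype Ω] [DecidableEq Ω] (v : Finset Ω → ℝ) (p : Ω → ℝ)
    (S : Finset Ω) : maxUtil v p - fMin v p S ≤ maxUtil v (addInd p S) := by
  classical
  obtain ⟨D, hD⟩ := demandMin_nonempty' v p
  have hne : ((fun D => (D ∩ S).card) '' DemandMin v p).Nonempty := ⟨_, ⟨D, hD, rfl⟩⟩
  obtain ⟨E, hE, hEcard⟩ := Nat.sInf_mem hne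
  have hq : util v (addInd p S) E = util v p E - (E ∩ S).card := by
    simp only [util, addInd, Finset.sum_add_distrib, Finset.sum_boole,
      Finset.filter_mem_eq_inter]
    ring
  have h1 : maxUtil v p - fMin v p S ≤ util v (addInd p S) E := by
    rw [hq, maxUtil_eq_of_demand hE.1, fMin, ← hEcard]
  exact h1.trans (Finset.le_sup' _ (Finset.mem_univ E))

/-- if `f_p(S) ≤ 0` then `L(p + 1_S) ≥ L(p)`. -/
theorem lyap_increase_of_nonpos_fTot {Ω : Type*} [Fintype Ω] [DecidableEq Ω] {n : ℕ}
    (v : Fin n → Finset Ω → ℝ) (hval : ∀ i, IsValuation (v i))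
    (hgs : ∀ i, GrossSubstitute (v i)) (hint : ∀ i, IsIntVal (v i))
    (p : Ω → ℝ) (hp : ∀ j, 0 ≤ p j) (hpint : IsIntVec p)
    (S : Finset Ω) (hS : fTot v p S ≤ 0) :
    Lyap v p ≤ Lyap v (addInd p S) := by
  have key : ∀ i, maxUtil (v i) p - fMin (v i) p S ≤ maxUtil (v i) (addInd p S) :=
    fun i => maxUtil_addInd_ge (v i) p S
  have hsum : ∑ j, addInd p S j = (∑ j, p j) + S.card := by
    simp only [addInd, Finset.sum_add_distrib, Finset.sum_boole,
      Finset.filter_mem_eq_inter, Finset.univ_inter]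
  have hf : (∑ i, (fMin (v i) p S : ℝ)) ≤ S.card := by
    have : (∑ i, (fMin (v i) p S : ℤ)) ≤ (S.card : ℤ) := by
      have := hS; simp only [fTot, sub_nonpos] at this ⊢; linarith
    exact_mod_cast this
  have hsum2 : ∑ i, (maxUtil (v i) p - (fMin (v i) p S : ℝ)) ≤
      ∑ i, maxUtil (v i) (addInd p S) := Finset.sum_le_sum fun i _ => key i
  rw [Finset.sum_sub_distrib] at hsum2
  simp only [Lyap, hsum]
  linarith
end
end
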